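/- The first integrals H1 and H2 of the map (P.v) are in involution with respect to the Poisson bracket defined by {w0,w1}={w1,w2}={w2,w3}=0, {w0,w2}=1/w1^2, {w1,w3}=1/w2^2, {w0,w3} = -(2*(w0*w1+w1*w2+w2*w3)+ν̃)/(w1^2*w2^2). -/
import Mathlib


noncomputable def D0 (F : ℝ → ℝ → ℝ → ℝ → ℝ) (w0 w1 w2 w3 : ℝ) : ℝ :=
  deriv (fun t => F t w1 w2 w3) w0
noncomputable def D1 (F : ℝ → ℝ → ℝ → ℝ → ℝ) (w0 w1 w2 w3 : ℝ) : ℝ :=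
  deriv (fun t => F w0 t w2 w3) w1
noncomputable def D2 (F : ℝ → ℝ → ℝ → ℝ → ℝ) (w0 w1 w2 w3 : ℝ) : ℝ :=
  deriv (fun t => F w0 w1 t w3) w2
noncomputable def D3 (F : ℝ → ℝ → ℝ → ℝ → ℝ) (w0 w1 w2 w3 : ℝ) : ℝ :=
  deriv (fun t => F w0 w1 w2 t) w3

noncomputable def pbV (nu : ℝ) (F G : ℝ → ℝ → ℝ → ℝ → ℝ) (w0 w1 w2 w3 : ℝ) : ℝ :=
  (1 / w1^2) * (D0 F w0 w1 w2 w3 * D2 G w0 w1 w2 w3 - D2 F w0 w1 w2 w3 * D0 G w0 w1 w2 w3)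
  + (1 / w2^2) * (D1 F w0 w1 w2 w3 * D3 G w0 w1 w2 w3 - D3 F w0 w1 w2 w3 * D1 G w0 w1 w2 w3)
  + (-(2*(w0*w1 + w1*w2 + w2*w3) + nu) / (w1^2 * w2^2)) * (D0 F w0 w1 w2 w3 * D3 G w0 w1 w2 w3 - D3 F w0 w1 w2 w3 * D0 G w0 w1 w2 w3)

noncomputable def H1v (a c nu w0 w1 w2 w3 : ℝ) : ℝ :=
  w3*w2^3*w1^2 + w2^2*w1^3*w0 - w3*w2^2*w1^2*w0 + w2^3*w1^3 + nu*w2^2*w1^2 + c*w2*w1 + a*(w2+w1)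

noncomputable def H2v (a c nu w0 w1 w2 w3 : ℝ) : ℝ :=
  w2^2*w1^2*((w3*w2+w1*w0+w2*w1)^2 + nu*(w3+w1)*(w2+w0)) + c*w2*w1*(w3*w2+w1*w0+w2*w1) + a*(w3*w2^2 + w1^2*w0 + w2^2*w1 + w2*w1^2)




lemma deriv_quartic (a4 a3 a2 a1 a0 x : ℝ) :
    deriv (fun t : ℝ => a4*t^4 + a3*t^3 + a2*t^2 + a1*t^1 + a0) x
      = 4*a4*x^3 + 3*a3*x^2 + 2*a2*x + a1 := by
  have h : HasDerivAt (fun t : ℝ => a4*t^4 + a3*t^3 + a2*t^2 + a1*t^1 + a0)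
      (a4*((4:ℕ)*x^(4-1)) + a3*((3:ℕ)*x^(3-1)) + a2*((2:ℕ)*x^(2-1)) + a1*((1:ℕ)*x^(1-1))) x := by
    exact (((((hasDerivAt_pow 4 x).const_mul a4).add ((hasDerivAt_pow 3 x).const_mul a3)).add
      ((hasDerivAt_pow 2 x).const_mul a2)).add ((hasDerivAt_pow 1 x).const_mul a1)).add_const a0
  rw [h.deriv]; push_cast; ring

lemma eH10 (a c nu w0 w1 w2 w3 : ℝ) :
    D0 (H1v a c nu) w0 w1 w2 w3 = (-1)*w1^2*w2^2*w3 + w1^3*w2^2 := by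
  have hf : (fun t : ℝ => H1v a c nu t w1 w2 w3) = (fun t : ℝ => (0)*t^4 + (0)*t^3 + (0)*t^2 + ((-1)*w1^2*w2^2*w3 + w1^3*w2^2)*t^1 + (w1^2*w2^3*w3 + w1^3*w2^3 + nu*w1^2*w2^2 + c*w1*w2 + a*w2 + a*w1)) := by
    funext t; simp only [H1v]; ring
  simp only [D0, hf, deriv_quartic]; ring

lemma eH11 (a c nu w0 w1 w2 w3 : ℝ) :
    D1 (H1v a c nu) w0 w1 w2 w3 = 2*w1*w2^3*w3 + 3*w1^2*w2^3 + (-2)*w0*w1*w2^2*w3 + 3*w0*w1^2*w2^2 + 2*nu*w1*w2^2 + c*w2 + a := by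
  have hf : (fun t : ℝ => H1v a c nu w0 t w2 w3) = (fun t : ℝ => (0)*t^4 + (w2^3 + w0*w2^2)*t^3 + (w2^3*w3 + (-1)*w0*w2^2*w3 + nu*w2^2)*t^2 + (c*w2 + a)*t^1 + (a*w2)) := by
    funext t; simp only [H1v]; ring
  simp only [D1, hf, deriv_quartic]; ring

lemma eH12 (a c nu w0 w1 w2 w3 : ℝ) :
    D2 (H1v a c nu) w0 w1 w2 w3 = 3*w1^2*w2^2*w3 + 3*w1^3*w2^2 + (-2)*w0*w1^2*w2*w3 + 2*w0*w1^3*w2 + 2*nu*w1^2*w2 + c*w1 + a := by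
  have hf : (fun t : ℝ => H1v a c nu w0 w1 t w3) = (fun t : ℝ => (0)*t^4 + (w1^2*w3 + w1^3)*t^3 + ((-1)*w0*w1^2*w3 + w0*w1^3 + nu*w1^2)*t^2 + (c*w1 + a)*t^1 + (a*w1)) := by
    funext t; simp only [H1v]; ring
  simp only [D2, hf, deriv_quartic]; ring

lemma eH13 (a c nu w0 w1 w2 w3 : ℝ) :
    D3 (H1v a c nu) w0 w1 w2 w3 = w1^2*w2^3 + (-1)*w0*w1^2*w2^2 := by
  have hf : (fun t : ℝ => H1v a c nu w0 w1 w2 t) = (fun t : ℝ => (0)*t^4 + (0)*t^3 + (0)*t^2 + (w1^2*w2^3 + (-1)*w0*w1^2*w2^2)*t^1 + (w1^3*w2^3 + w0*w1^3*w2^2 + nu*w1^2*w2^2 + c*w1*w2 + a*w2 + a*w1)) := by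
    funext t; simp only [H1v]; ring
  simp only [D3, hf, deriv_quartic]; ring

lemma eH20 (a c nu w0 w1 w2 w3 : ℝ) :
    D0 (H2v a c nu) w0 w1 w2 w3 = 2*w1^3*w2^3*w3 + 2*w1^4*w2^3 + 2*w0*w1^4*w2^2 + nu*w1^2*w2^2*w3 + nu*w1^3*w2^2 + c*w1^2*w2 + a*w1^2 := by
  have hf : (fun t : ℝ => H2v a c nu t w1 w2 w3) = (fun t : ℝ => (0)*t^4 + (0)*t^3 + (w1^4*w2^2)*t^2 + (2*w1^3*w2^3*w3 + 2*w1^4*w2^3 + nu*w1^2*w2^2*w3 + nu*w1^3*w2^2 + c*w1^2*w2 + a*w1^2)*t^1 + (w1^2*w2^4*w3^2 + 2*w1^3*w2^4*w3 + w1^4*w2^4 + nu*w1^2*w2^3*w3 + nu*w1^3*w2^3 + c*w1*w2^2*w3 + c*w1^2*w2^2 + a*w2^2*w3 + a*w1*w2^2 + a*w1^2*w2)) := by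
    funext t; simp only [H2v]; ring
  simp only [D0, hf, deriv_quartic]; ring

lemma eH21 (a c nu w0 w1 w2 w3 : ℝ) :
    D1 (H2v a c nu) w0 w1 w2 w3 = 2*w1*w2^4*w3^2 + 6*w1^2*w2^4*w3 + 4*w1^3*w2^4 + 6*w0*w1^2*w2^3*w3 + 8*w0*w1^3*w2^3 + 4*w0^2*w1^3*w2^2 + 2*nu*w1*w2^3*w3 + 3*nu*w1^2*w2^3 + 2*nu*w0*w1*w2^2*w3 + 3*nu*w0*w1^2*w2^2 + c*w2^2*w3 + 2*c*w1*w2^2 + 2*c*w0*w1*w2 + a*w2^2 + 2*a*w1*w2 + 2*a*w0*w1 := by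
  have hf : (fun t : ℝ => H2v a c nu w0 t w2 w3) = (fun t : ℝ => (w2^4 + 2*w0*w2^3 + w0^2*w2^2)*t^4 + (2*w2^4*w3 + 2*w0*w2^3*w3 + nu*w2^3 + nu*w0*w2^2)*t^3 + (w2^4*w3^2 + nu*w2^3*w3 + nu*w0*w2^2*w3 + c*w2^2 + c*w0*w2 + a*w2 + a*w0)*t^2 + (c*w2^2*w3 + a*w2^2)*t^1 + (a*w2^2*w3)) := by
    funext t; simp only [H2v]; ring
  simp only [D1, hf, deriv_quartic]; ring

lemma eH22 (a c nu w0 w1 w2 w3 : ℝ) :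
    D2 (H2v a c nu) w0 w1 w2 w3 = 4*w1^2*w2^3*w3^2 + 8*w1^3*w2^3*w3 + 4*w1^4*w2^3 + 6*w0*w1^3*w2^2*w3 + 6*w0*w1^4*w2^2 + 2*w0^2*w1^4*w2 + 3*nu*w1^2*w2^2*w3 + 3*nu*w1^3*w2^2 + 2*nu*w0*w1^2*w2*w3 + 2*nu*w0*w1^3*w2 + 2*c*w1*w2*w3 + 2*c*w1^2*w2 + c*w0*w1^2 + 2*a*w2*w3 + 2*a*w1*w2 + a*w1^2 := by
  have hf : (fun t : ℝ => H2v a c nu w0 w1 t w3) = (fun t : ℝ => (w1^2*w3^2 + 2*w1^3*w3 + w1^4)*t^4 + (2*w0*w1^3*w3 + 2*w0*w1^4 + nu*w1^2*w3 + nu*w1^3)*t^3 + (w0^2*w1^4 + nu*w0*w1^2*w3 + nu*w0*w1^3 + c*w1*w3 + c*w1^2 + a*w3 + a*w1)*t^2 + (c*w0*w1^2 + a*w1^2)*t^1 + (a*w0*w1^2)) := by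
    funext t; simp only [H2v]; ring
  simp only [D2, hf, deriv_quartic]; ring

lemma eH23 (a c nu w0 w1 w2 w3 : ℝ) :
    D3 (H2v a c nu) w0 w1 w2 w3 = 2*w1^2*w2^4*w3 + 2*w1^3*w2^4 + 2*w0*w1^3*w2^3 + nu*w1^2*w2^3 + nu*w0*w1^2*w2^2 + c*w1*w2^2 + a*w2^2 := by
  have hf : (fun t : ℝ => H2v a c nu w0 w1 w2 t) = (fun t : ℝ => (0)*t^4 + (0)*t^3 + (w1^2*w2^4)*t^2 + (2*w1^3*w2^4 + 2*w0*w1^3*w2^3 + nu*w1^2*w2^3 + nu*w0*w1^2*w2^2 + c*w1*w2^2 + a*w2^2)*t^1 + (w1^4*w2^4 + 2*w0*w1^4*w2^3 + w0^2*w1^4*w2^2 + nu*w1^3*w2^3 + nu*w0*w1^3*w2^2 + c*w1^2*w2^2 + c*w0*w1^2*w2 + a*w1*w2^2 + a*w1^2*w2 + a*w0*w1^2)) := by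
    funext t; simp only [H2v]; ring
  simp only [D3, hf, deriv_quartic]; ring

theorem stmt6 (a c nu w0 w1 w2 w3 : ℝ) (h : w1 * w2 ≠ 0) :
    pbV nu (H1v a c nu) (H2v a c nu) w0 w1 w2 w3 = 0 := by
  have h1 : w1 ≠ 0 := fun h1 => h (by rw [h1]; ring)
  have h2 : w2 ≠ 0 := fun h2 => h (by rw [h2]; ring)
  rw [pbV, eH10, eH11, eH12, eH13, eH20, eH21, eH22, eH23]
  field_simp
  ring
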